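/- Let n ≥ 1 be a natural number, ω ∈ ℂ, τ := 2*π*Complex.I, and M := !![1, ω; 0, τ^n] ∈ Matrix (Fin 2) (Fin 2) ℂ. Then M is invertible with M⁻¹ = !![1, −ω/τ^n; 0, τ^{−n}]; the element Σ_{k : Fin 2} (M⁻¹) 0 k ⊗ₜ[ℚ] (τ^{−n} * (M k 1)) of ℂ ⊗[ℚ] ℂ equals 1 ⊗ₜ (ω/τ^n) − (ω/τ^n) ⊗ₜ 1, so its image in Λ²_ℚ ℂ under x ⊗ₜ y ↦ x ∧ y equals 1 ∧ (2*ω/τ^n). Moreover, for every x ∈ ℂ one has 1 ∧ x = 0 in Λ²_ℚ ℂ if and only if x lies in the image of the algebra map ℚ → ℂ; consequently the ℚ-linear map ℂ → Λ²_ℚ ℂ, ω ↦ 1 ∧ (2*ω/τ^n), has kernel exactly ℚ • τ^n. -/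

import Mathlib

/-!
The only non-formal point is that `1 ∧ x` vanishes in `⋀[ℚ]^2 ℂ` only for rational `x`: if
`1` and `x` are `ℚ`-linearly independent, then `1 ∧ x` is a member of a basis of the exterior
square, hence nonzero. Everything else is computation with the upper triangular period matrix,
where antisymmetry turns `1 ⊗ c - c ⊗ 1` into `1 ∧ 2c`.
-/

open scoped TensorProduct

noncomputable section

/-- The wedge product `x ∧ y` of two complex numbers, as an element of the second
exterior power `⋀[ℚ]^2 ℂ` of `ℂ` as a `ℚ`-vector space. -/
def wedge (x y : ℂ) : ⋀[ℚ]^2 ℂ :=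
  ⟨ExteriorAlgebra.ιMulti ℚ 2 ![x, y],
    ExteriorAlgebra.ιMulti_range ℚ 2 ⟨![x, y], rfl⟩⟩

lemma update_zero (x y z : ℂ) : Function.update ![x, y] 0 z = ![z, y] := by
  ext i; fin_cases i <;> simp

lemma update_one (x y z : ℂ) : Function.update ![x, y] 1 z = ![x, z] := by
  ext i; fin_cases i <;> simp

/-- The wedge product as a `ℚ`-bilinear map. -/
def wedgeBil : ℂ →ₗ[ℚ] ℂ →ₗ[ℚ] ⋀[ℚ]^2 ℂ :=
  LinearMap.mk₂ ℚ wedge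
    (fun x x' y => by
      have h := (ExteriorAlgebra.ιMulti ℚ 2 (M := ℂ)).map_update_add ![x, y] 0 x x'
      apply Subtype.ext
      simpa [wedge, update_zero] using h)
    (fun q x y => by
      have h := (ExteriorAlgebra.ιMulti ℚ 2 (M := ℂ)).map_update_smul ![x, y] 0 q x
      apply Subtype.ext
      simpa [wedge, update_zero] using h)
    (fun x y y' => by
      have h := (ExteriorAlgebra.ιMulti ℚ 2 (M := ℂ)).map_update_add ![x, y] 1 y y'
      apply Subtype.ext
      simpa [wedge, update_one] using h)
    (fun q x y => by
      have h := (ExteriorAlgebra.ιMulti ℚ 2 (M := ℂ)).map_update_smul ![x, y] 1 q y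
      apply Subtype.ext
      simpa [wedge, update_one] using h)

/-- The `ℚ`-linear map `ℂ ⊗[ℚ] ℂ → ⋀[ℚ]^2 ℂ` sending `x ⊗ₜ y` to `x ∧ y`. -/
def wedgeTensor : ℂ ⊗[ℚ] ℂ →ₗ[ℚ] ⋀[ℚ]^2 ℂ :=
  TensorProduct.lift wedgeBil

open exteriorPower Set.powersetCard in
theorem exteriorPower.ιMulti_ne_zero_of_linearIndependent {K E : Type*} [Field K]
    [AddCommGroup E] [Module K E] {n : ℕ} {v : Fin n → E} (hv : LinearIndependent K v) :
    ιMulti K n v ≠ 0 := by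
  simpa [ιMulti_family] using
    (ιMulti_family_linearIndependent_field (n := n) hv).ne_zero
      (ofFinEmbEquiv (RelEmbedding.refl (· ≤ ·)))

lemma wedge_eq_ιMulti (x y : ℂ) : wedge x y = exteriorPower.ιMulti ℚ 2 ![x, y] := rfl

@[simp]
lemma wedgeBil_apply (x y : ℂ) : wedgeBil x y = wedge x y := rfl

@[simp]
lemma wedgeTensor_tmul (x y : ℂ) : wedgeTensor (x ⊗ₜ y) = wedge x y := rfl

lemma wedge_self (x : ℂ) : wedge x x = 0 := by
  rw [wedge_eq_ιMulti]
  exact (exteriorPower.ιMulti ℚ 2).map_eq_zero_of_eq ![x, x] (i := 0) (j := 1) rfl (by decide)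

lemma wedge_swap (x y : ℂ) : wedge y x = -wedge x y := by
  rw [wedge_eq_ιMulti, wedge_eq_ιMulti]
  have h := (exteriorPower.ιMulti ℚ 2).map_swap ![x, y] (i := 0) (j := 1) (by decide)
  have hswap : ![x, y] ∘ Equiv.swap 0 1 = ![y, x] := by
    ext i; fin_cases i <;> rfl
  rwa [hswap] at h

lemma wedge_one_eq_zero_iff (x : ℂ) : wedge 1 x = 0 ↔ x ∈ Set.range (algebraMap ℚ ℂ) := by
  constructor
  · intro h
    by_contra hx
    have hli : LinearIndependent ℚ ![(1 : ℂ), x] := by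
      rw [LinearIndependent.pair_iff' one_ne_zero]
      intro q hq
      exact hx ⟨q, by simpa [Algebra.algebraMap_eq_smul_one] using hq⟩
    exact exteriorPower.ιMulti_ne_zero_of_linearIndependent hli (wedge_eq_ιMulti 1 x ▸ h)
  · rintro ⟨q, rfl⟩
    rw [Algebra.algebraMap_eq_smul_one, ← wedgeBil_apply, map_smul, wedgeBil_apply, wedge_self,
      smul_zero]

lemma ker_wedgeBil_one : LinearMap.ker (wedgeBil 1) = Submodule.span ℚ {1} := by
  ext x
  rw [LinearMap.mem_ker, wedgeBil_apply, wedge_one_eq_zero_iff, Submodule.mem_span_singleton]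
  simp [eq_comm]

lemma ker_wedgeBil_one_comp_mulLeft {c : ℂ} (hc : c ≠ 0) :
    LinearMap.ker ((wedgeBil 1).comp (LinearMap.mulLeft ℚ c)) = Submodule.span ℚ {c⁻¹} := by
  ext z
  rw [LinearMap.mem_ker, LinearMap.comp_apply, ← LinearMap.mem_ker, ker_wedgeBil_one,
    LinearMap.mulLeft_apply, Submodule.mem_span_singleton, Submodule.mem_span_singleton]
  simp only [Rat.smul_def, mul_one]
  refine exists_congr fun q => ?_
  rw [eq_comm, ← eq_inv_mul_iff_mul_eq₀ hc, mul_comm, eq_comm]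

lemma wedge_one_two_mul (x : ℂ) : wedge 1 (2 * x) = wedge 1 x + wedge 1 x := by
  rw [two_mul, ← wedgeBil_apply, map_add, wedgeBil_apply]

lemma wedgeTensor_one_tmul_sub_tmul_one (x : ℂ) :
    wedgeTensor (1 ⊗ₜ x - x ⊗ₜ 1) = wedge 1 (2 * x) := by
  rw [map_sub, wedgeTensor_tmul, wedgeTensor_tmul, wedge_swap 1 x, sub_neg_eq_add,
    wedge_one_two_mul]

lemma Matrix.inv_fin_two_of_one_zero {K : Type*} [Field K] {a : K} (ha : a ≠ 0) (b : K) :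
    (!![1, b; 0, a])⁻¹ = !![1, -b / a; 0, a⁻¹] := by
  apply Matrix.inv_eq_right_inv
  ext i j
  fin_cases i <;> fin_cases j <;> simp [field]

lemma sum_inv_fin_two_of_one_zero_tmul {a : ℂ} (ha : a ≠ 0) (b : ℂ) :
    ∑ k : Fin 2, (!![1, b; 0, a])⁻¹ 0 k ⊗ₜ[ℚ] (a⁻¹ * !![1, b; 0, a] k 1) =
      1 ⊗ₜ (b / a) - (b / a) ⊗ₜ 1 := by
  simp [Matrix.inv_fin_two_of_one_zero ha, inv_mul_cancel₀ ha, TensorProduct.neg_tmul,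
    sub_eq_add_neg, div_eq_inv_mul]

theorem period_of_rank_two_extension_general (n : ℕ) (ω : ℂ) :
    letI τ : ℂ := 2 * Real.pi * Complex.I
    letI M : Matrix (Fin 2) (Fin 2) ℂ := !![1, ω; 0, τ ^ n]
    IsUnit M ∧
      M⁻¹ = !![1, -ω / τ ^ n; 0, (τ ^ n)⁻¹] ∧
      (∑ k : Fin 2, (M⁻¹ 0 k) ⊗ₜ[ℚ] ((τ ^ n)⁻¹ * M k 1)) =
        1 ⊗ₜ[ℚ] (ω / τ ^ n) - (ω / τ ^ n) ⊗ₜ[ℚ] 1 ∧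
      wedgeTensor (∑ k : Fin 2, (M⁻¹ 0 k) ⊗ₜ[ℚ] ((τ ^ n)⁻¹ * M k 1)) =
        wedge 1 (2 * ω / τ ^ n) ∧
      (∀ x : ℂ, wedge 1 x = 0 ↔ x ∈ Set.range (algebraMap ℚ ℂ)) ∧
      LinearMap.ker ((wedgeBil 1).comp (LinearMap.mulLeft ℚ (2 / τ ^ n))) =
        Submodule.span ℚ {τ ^ n} := by
  set τn : ℂ := (2 * Real.pi * Complex.I) ^ n
  have hτn : τn ≠ 0 := pow_ne_zero n (by simp [Real.pi_ne_zero, Complex.I_ne_zero])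
  have hsum := sum_inv_fin_two_of_one_zero_tmul hτn ω
  refine ⟨?_, Matrix.inv_fin_two_of_one_zero hτn ω, hsum, ?_, wedge_one_eq_zero_iff, ?_⟩
  · simpa [Matrix.isUnit_iff_isUnit_det, Matrix.det_fin_two_of] using hτn
  · rw [hsum, wedgeTensor_one_tmul_sub_tmul_one, mul_div_assoc]
  · have hinv : (2 / τn)⁻¹ = (2⁻¹ : ℚ) • τn := by
      rw [inv_div, Rat.smul_def]
      push_cast
      ring
    rw [ker_wedgeBil_one_comp_mulLeft (div_ne_zero two_ne_zero hτn), hinv,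
      Submodule.span_singleton_smul_eq (by norm_num)]

theorem period_of_rank_two_extension (n : ℕ) (hn : 1 ≤ n) (ω : ℂ) :
    letI τ : ℂ := 2 * Real.pi * Complex.I
    letI M : Matrix (Fin 2) (Fin 2) ℂ := !![1, ω; 0, τ ^ n]
    IsUnit M ∧
      M⁻¹ = !![1, -ω / τ ^ n; 0, (τ ^ n)⁻¹] ∧
      (∑ k : Fin 2, (M⁻¹ 0 k) ⊗ₜ[ℚ] ((τ ^ n)⁻¹ * M k 1)) =
        1 ⊗ₜ[ℚ] (ω / τ ^ n) - (ω / τ ^ n) ⊗ₜ[ℚ] 1 ∧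
      wedgeTensor (∑ k : Fin 2, (M⁻¹ 0 k) ⊗ₜ[ℚ] ((τ ^ n)⁻¹ * M k 1)) =
        wedge 1 (2 * ω / τ ^ n) ∧
      (∀ x : ℂ, wedge 1 x = 0 ↔ x ∈ Set.range (algebraMap ℚ ℂ)) ∧
      LinearMap.ker ((wedgeBil 1).comp (LinearMap.mulLeft ℚ (2 / τ ^ n))) =
        Submodule.span ℚ {τ ^ n} :=
  period_of_rank_two_extension_general n ω

end
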